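/- arXiv:1409.6949 — 3 statements merged into one kernel-verified Lean document; each statement's English description precedes it below -/
import Mathlib

section
/- If C is a minimum vertex cover of a finite simple graph G, then for every independent set A ⊆ C one has |N_{V−C}(A)| ≥ |A|. -/
open Finset

/-- `C` is a vertex cover of `G`: every edge has an endpoint in `C`. -/
def IsCover {V : Type*} (G : SimpleGraph V) (C : Finset V) : Prop :=
  ∀ ⦃u v : V⦄, G.Adj u v → u ∈ C ∨ v ∈ C

/-- `A` is an independent set of `G`: no two of its vertices are adjacent. -/
def IsIndep {V : Type*} (G : SimpleGraph V) (A : Finset V) : Prop :=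
  ∀ ⦃u : V⦄, u ∈ A → ∀ ⦃v : V⦄, v ∈ A → ¬ G.Adj u v

/-- The vertex cover number β(G): the minimum size of a vertex cover of `G`. -/
noncomputable def coverNumber {V : Type*} [Fintype V] (G : SimpleGraph V) : ℕ :=
  sInf {n : ℕ | ∃ C : Finset V, IsCover G C ∧ C.card = n}

/-- `extNbr G C S` is N_{V−C}(S): the set of vertices outside `C` that are adjacent to
at least one vertex of `S`. -/
def extNbr {V : Type*} [Fintype V] [DecidableEq V] (G : SimpleGraph V) [DecidableRel G.Adj]
    (C S : Finset V) : Finset V :=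
  Finset.univ.filter (fun v => v ∉ C ∧ ∃ s ∈ S, G.Adj s v)

/-!
If `|N_{V−C}(A)| < |A|`, exchanging `A` for its outside neighbourhood gives the cover
`(C \ A) ∪ N_{V−C}(A)`, strictly smaller than `C`. It is a cover because an edge leaving
the independent set `A` ends either in `C \ A` or outside `C`, hence in `N_{V−C}(A)`.
-/

section

variable {V : Type*} (G : SimpleGraph V)

theorem coverNumber_le_card [Fintype V] {C : Finset V} (hC : IsCover G C) :
    coverNumber G ≤ C.card :=
  Nat.sInf_le ⟨C, hC, rfl⟩

variable [Fintype V] [DecidableEq V] [DecidableRel G.Adj]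

theorem mem_extNbr {C S : Finset V} {v : V} :
    v ∈ extNbr G C S ↔ v ∉ C ∧ ∃ s ∈ S, G.Adj s v := by
  simp [extNbr]

variable {G}

theorem IsCover.sdiff_union_extNbr {C A : Finset V} (hC : IsCover G C) (hA : IsIndep G A) :
    IsCover G ((C \ A) ∪ extNbr G C A) := by
  have leaving : ∀ ⦃u v⦄, G.Adj u v → u ∈ A → v ∈ (C \ A) ∪ extNbr G C A := by
    intro u v huv huA
    have hvA : v ∉ A := fun hvA => hA huA hvA huv
    by_cases hvC : v ∈ C
    · exact mem_union_left _ (mem_sdiff.2 ⟨hvC, hvA⟩)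
    · exact mem_union_right _ ((mem_extNbr G).2 ⟨hvC, u, huA, huv⟩)
  intro u v huv
  by_cases huA : u ∈ A
  · exact .inr (leaving huv huA)
  by_cases hvA : v ∈ A
  · exact .inl (leaving huv.symm hvA)
  rcases hC huv with hu | hv
  · exact .inl (mem_union_left _ (mem_sdiff.2 ⟨hu, huA⟩))
  · exact .inr (mem_union_left _ (mem_sdiff.2 ⟨hv, hvA⟩))

end

/-- If `C` is a minimum vertex cover of `G`, then every independent set `A ⊆ C`
satisfies `|N_{V−C}(A)| ≥ |A|`. -/
theorem card_le_card_extNbr {V : Type*} [Fintype V] [DecidableEq V]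
    (G : SimpleGraph V) [DecidableRel G.Adj] (C : Finset V)
    (hC : IsCover G C) (hmin : C.card = coverNumber G) :
    ∀ A ⊆ C, IsIndep G A → A.card ≤ (extNbr G C A).card := by
  intro A hAC hA
  have hmin_le := coverNumber_le_card G (hC.sdiff_union_extNbr hA)
  have hunion := card_union_le (C \ A) (extNbr G C A)
  have hsdiff := card_sdiff_of_subset hAC
  have hAC_card := card_le_card hAC
  omega
end

section
/- Let G be a finite simple claw-free graph with at least one edge. Then G is of class one. -/
open Finset

/-- `G` admits a feasible schedule for a boat of capacity `b`, in the sense of the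
structure theorem of Csorba, Hurkens and Woeginger. -/
def Feasible {V : Type*} [Fintype V] [DecidableEq V] (G : SimpleGraph V) (b : ℕ) : Prop :=
  ∃ X₁ X₂ X₃ Y₁ Y₂ : Finset V,
    Disjoint X₁ X₂ ∧ Disjoint X₁ X₃ ∧ Disjoint X₂ X₃ ∧
    IsIndep G (X₁ ∪ X₂ ∪ X₃) ∧
    Y₁.Nonempty ∧ Y₂.Nonempty ∧
    Y₁ ⊆ Finset.univ \ (X₁ ∪ X₂ ∪ X₃) ∧ Y₂ ⊆ Finset.univ \ (X₁ ∪ X₂ ∪ X₃) ∧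
    (Finset.univ \ (X₁ ∪ X₂ ∪ X₃)).card ≤ b ∧
    IsIndep G (X₁ ∪ Y₁) ∧ IsIndep G (X₂ ∪ Y₂) ∧
    X₃.card ≤ Y₁.card + Y₂.card

/-- `G` is of class one if it has a feasible schedule for boat capacity β(G). -/
def ClassOne {V : Type*} [Fintype V] [DecidableEq V] (G : SimpleGraph V) : Prop :=
  Feasible G (coverNumber G)

/-- `G` is of class two if it is not of class one. -/
def ClassTwo {V : Type*} [Fintype V] [DecidableEq V] (G : SimpleGraph V) : Prop :=
  ¬ ClassOne G

/-!
Take a minimum vertex cover `C`, so that `X = V \ C` is independent and `|C| = β(G)`, and a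
vertex `y ∈ C` (there is one because `G` has an edge). Since `X` is independent, claw-freeness
leaves `y` with at most two neighbours in `X`. The schedule moves these neighbours as `X₃`, the
rest of `X` as `X₁`, and `Y₁ = Y₂ = {y}`, which is enough since `|X₃| ≤ 2 = |Y₁| + |Y₂|`.
-/

section

variable {V : Type*} {G : SimpleGraph V}

theorem exists_isCover_card_eq_coverNumber [Fintype V] (G : SimpleGraph V) :
    ∃ C : Finset V, IsCover G C ∧ C.card = coverNumber G :=
  Nat.sInf_mem (s := {n | ∃ C : Finset V, IsCover G C ∧ C.card = n})
    ⟨_, univ, fun u _ _ => Or.inl (mem_univ u), rfl⟩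

theorem IsCover.nonempty {C : Finset V} (hC : IsCover G C) {u v : V} (huv : G.Adj u v) :
    C.Nonempty :=
  (hC huv).elim (fun hu => ⟨u, hu⟩) fun hv => ⟨v, hv⟩

theorem IsCover.isIndep_compl [Fintype V] [DecidableEq V] {C : Finset V} (hC : IsCover G C) :
    IsIndep G (univ \ C) := fun _ hu _ hv huv =>
  (hC huv).elim (mem_sdiff.mp hu).2 (mem_sdiff.mp hv).2

theorem IsIndep.mono {A B : Finset V} (hB : IsIndep G B) (hAB : A ⊆ B) : IsIndep G A :=
  fun _ hu _ hv => hB (hAB hu) (hAB hv)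

theorem isIndep_singleton (y : V) : IsIndep G {y} := by
  intro u hu v hv
  rw [mem_singleton.mp hu, mem_singleton.mp hv]
  exact G.irrefl

theorem IsIndep.union_singleton [DecidableEq V] {A : Finset V} (hA : IsIndep G A) {y : V}
    (hy : ∀ a ∈ A, ¬ G.Adj y a) : IsIndep G (A ∪ {y}) := by
  intro u hu v hv
  rw [mem_union, mem_singleton] at hu hv
  rcases hu with hu | rfl <;> rcases hv with hv | rfl
  · exact hA hu hv
  · exact fun h => hy u hu h.symm
  · exact hy v hv
  · exact G.irrefl

theorem card_filter_adj_le_two_of_isIndep [DecidableRel G.Adj]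
    (hclawfree : ¬ ∃ v a b c : V, a ≠ b ∧ a ≠ c ∧ b ≠ c ∧
      G.Adj v a ∧ G.Adj v b ∧ G.Adj v c ∧ ¬ G.Adj a b ∧ ¬ G.Adj a c ∧ ¬ G.Adj b c)
    {A : Finset V} (hA : IsIndep G A) (y : V) : (A.filter (G.Adj y)).card ≤ 2 := by
  by_contra! h
  obtain ⟨a, ha, b, hb, c, hc, hab, hac, hbc⟩ := two_lt_card.mp h
  rw [mem_filter] at ha hb hc
  exact hclawfree ⟨y, a, b, c, hab, hac, hbc, ha.2, hb.2, hc.2,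
    hA ha.1 hb.1, hA ha.1 hc.1, hA hb.1 hc.1⟩

theorem feasible_of_isCover [Fintype V] [DecidableEq V] [DecidableRel G.Adj] {C : Finset V}
    (hC : IsCover G C) {b : ℕ} (hb : C.card ≤ b) {y : V} (hy : y ∈ C)
    (hdeg : ((univ \ C).filter (G.Adj y)).card ≤ 2) : Feasible G b := by
  set X := univ \ C
  set N := X.filter (G.Adj y)
  have hX : (X \ N) ∪ ∅ ∪ N = X := by
    rw [union_empty, sdiff_union_of_subset (filter_subset _ _)]
  have hY : univ \ X = C := by simp [X]
  have hyY : {y} ⊆ univ \ ((X \ N) ∪ ∅ ∪ N) := by rwa [hX, hY, singleton_subset_iff]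
  refine ⟨X \ N, ∅, N, {y}, {y}, disjoint_empty_right _, sdiff_disjoint, disjoint_empty_left _,
    by rw [hX]; exact hC.isIndep_compl, singleton_nonempty y, singleton_nonempty y, hyY, hyY,
    by rwa [hX, hY], ?_, by simpa using isIndep_singleton y, by simpa using hdeg⟩
  refine (hC.isIndep_compl.mono sdiff_subset).union_singleton fun a ha hya => ?_
  obtain ⟨haX, haN⟩ := mem_sdiff.mp ha
  exact haN (mem_filter.mpr ⟨haX, hya⟩)

end

/-- A finite simple claw-free graph with at least one edge is of class one. -/
theorem classOne_of_clawFree {V : Type*} [Fintype V] [DecidableEq V]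
    (G : SimpleGraph V) (hedge : ∃ u v, G.Adj u v)
    (hclawfree : ¬ ∃ v a b c : V, a ≠ b ∧ a ≠ c ∧ b ≠ c ∧
      G.Adj v a ∧ G.Adj v b ∧ G.Adj v c ∧ ¬ G.Adj a b ∧ ¬ G.Adj a c ∧ ¬ G.Adj b c) :
    ClassOne G := by
  classical
  obtain ⟨C, hC, hCcard⟩ := exists_isCover_card_eq_coverNumber G
  obtain ⟨u, v, huv⟩ := hedge
  obtain ⟨y, hy⟩ := hC.nonempty huv
  exact feasible_of_isCover hC hCcard.le hy
    (card_filter_adj_le_two_of_isIndep hclawfree hC.isIndep_compl y)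
end

section
/- Let G be a finite nonempty r-regular simple graph with 2 ≤ r ≤ 5. Then G is of class one. -/
/-! Let `X` be a maximum independent set and `Y` its complement, so `|Y| ≤ β(G)`, and `|Y| ≥ r`
because the neighbours of any vertex of `X` lie in `Y`. If `y₀ ∈ Y` has the fewest neighbours in
`X`, say `d`, then every vertex of `Y` has at most `r - d` neighbours in `Y`, so `Y` contains an
independent set `I` with `|Y| ≤ |I| (r - d + 1)`. For `r ≤ 5` this forces `d ≤ |I| + 1`, which is
exactly the room needed to schedule with `Y₁ = I` and `Y₂ = {y₀}`. -/

open Finset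

namespace IsIndep

variable {V : Type*} {G : SimpleGraph V}

lemma isIndepSet {A : Finset V} (hA : IsIndep G A) : G.IsIndepSet (A : Set V) :=
  fun _ hu _ hv _ => hA hu hv

lemma of_isIndepSet {A : Finset V} (hA : G.IsIndepSet (A : Set V)) : IsIndep G A := by
  intro u hu v hv huv
  obtain rfl | hne := eq_or_ne u v
  · exact G.loopless.irrefl u huv
  · exact hA hu hv hne huv

lemma insert [DecidableEq V] {A : Finset V} {v : V} (hA : IsIndep G A)
    (hv : ∀ a ∈ A, ¬G.Adj v a) : IsIndep G (insert v A) := by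
  intro u hu w hw
  rw [mem_insert] at hu hw
  rcases hu with rfl | hu <;> rcases hw with rfl | hw
  · exact G.loopless.irrefl _
  · exact hv w hw
  · exact fun h => hv _ hu h.symm
  · exact hA hu hw

lemma _root_.isIndep_singleton_s16 (v : V) : IsIndep G {v} := by
  intro u hu w hw
  rw [mem_singleton] at hu hw
  subst hu hw
  exact G.loopless.irrefl _

lemma mono_s16 {A B : Finset V} (hB : IsIndep G B) (hAB : A ⊆ B) : IsIndep G A :=
  fun _ hu _ hv => hB (hAB hu) (hAB hv)

lemma union [DecidableEq V] {A B : Finset V} (hA : IsIndep G A) (hB : IsIndep G B)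
    (hAB : ∀ a ∈ A, ∀ b ∈ B, ¬G.Adj a b) : IsIndep G (A ∪ B) := by
  intro u hu w hw
  rw [mem_union] at hu hw
  rcases hu with hu | hu <;> rcases hw with hw | hw
  · exact hA hu hw
  · exact hAB u hu w hw
  · exact fun h => hAB w hw u hu h.symm
  · exact hB hu hw

end IsIndep

lemma IsCover.isIndep_sdiff {V : Type*} [DecidableEq V] {G : SimpleGraph V} {C : Finset V}
    (hC : IsCover G C) (S : Finset V) : IsIndep G (S \ C) := by
  intro u hu v hv huv
  rcases hC huv with h | h
  · exact (mem_sdiff.mp hu).2 h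
  · exact (mem_sdiff.mp hv).2 h

lemma IsIndep.degree_le_card_univ_sdiff {V : Type*} [Fintype V] [DecidableEq V]
    {G : SimpleGraph V} [DecidableRel G.Adj] {X : Finset V} (hX : IsIndep G X) {x : V}
    (hx : x ∈ X) : G.degree x ≤ #(univ \ X) := by
  rw [← SimpleGraph.card_neighborFinset_eq_degree]
  exact card_le_card fun y hy =>
    mem_sdiff.mpr ⟨mem_univ y, fun hyX => hX hx hyX ((G.mem_neighborFinset x y).mp hy)⟩

namespace SimpleGraph.IsMaximumIndepSet

variable {V : Type*} {G : SimpleGraph V} {X : Finset V}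

lemma isIndep [Finite V] (hX : G.IsMaximumIndepSet X) : IsIndep G X :=
  IsIndep.of_isIndepSet hX.isIndepSet

lemma card_le [Finite V] (hX : G.IsMaximumIndepSet X) {A : Finset V} (hA : IsIndep G A) :
    #A ≤ #X :=
  hX.maximum A hA.isIndepSet

lemma nonempty [Finite V] [Nonempty V] (hX : G.IsMaximumIndepSet X) : X.Nonempty := by
  inhabit V
  simpa using hX.card_le (isIndep_singleton_s16 (default : V))

/-- The complement of a minimum vertex cover is independent, so it is no larger than `X`. -/
lemma card_univ_sdiff_le_coverNumber [Fintype V] [DecidableEq V] (hX : G.IsMaximumIndepSet X) :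
    #(univ \ X) ≤ coverNumber G := by
  refine le_csInf ⟨_, univ, fun u _ _ => Or.inl (mem_univ u), rfl⟩ ?_
  rintro _ ⟨C, hC, rfl⟩
  have := hX.card_le (hC.isIndep_sdiff univ)
  rw [card_univ_sdiff] at this ⊢
  have := card_le_univ C
  omega

end SimpleGraph.IsMaximumIndepSet

/-- Greedy choice: each vertex taken into the independent set discards at most `D + 1`
vertices of `W`. -/
lemma exists_isIndep_subset_card_le_mul {V : Type*} [DecidableEq V] (G : SimpleGraph V)
    [DecidableRel G.Adj] (D : ℕ) (W : Finset V) (hW : ∀ y ∈ W, #{z ∈ W | G.Adj y z} ≤ D) :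
    ∃ I ⊆ W, IsIndep G I ∧ #W ≤ #I * (D + 1) := by
  induction W using Finset.strongInduction with
  | H W ih =>
  obtain rfl | ⟨w, hw⟩ := W.eq_empty_or_nonempty
  · exact ⟨∅, empty_subset _, fun u hu => absurd hu (notMem_empty u), by simp⟩
  set B := insert w {z ∈ W | G.Adj w z}
  have hBW : B ⊆ W := insert_subset hw (filter_subset _ _)
  obtain ⟨I, hIW, hI, hcard⟩ := ih (W \ B) (sdiff_ssubset hBW (insert_nonempty _ _)) fun y hy =>
    (card_le_card (filter_subset_filter _ sdiff_subset)).trans (hW y (mem_sdiff.mp hy).1)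
  have hwI : ∀ a ∈ I, a ∉ B := fun a ha => (mem_sdiff.mp (hIW ha)).2
  refine ⟨insert w I, insert_subset hw (hIW.trans sdiff_subset), ?_, ?_⟩
  · refine hI.insert fun a ha hwa => hwI a ha (mem_insert_of_mem ?_)
    exact mem_filter.mpr ⟨(mem_sdiff.mp (hIW ha)).1, hwa⟩
  · have hB : #B ≤ D + 1 := (card_insert_le _ _).trans (Nat.succ_le_succ (hW w hw))
    rw [card_insert_of_notMem fun h => hwI w h (mem_insert_self _ _), Nat.succ_mul]
    have := card_sdiff_add_card_eq_card hBW
    omega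

lemma feasible_of_card_adj_both_le {V : Type*} [Fintype V] [DecidableEq V]
    {G : SimpleGraph V} [DecidableRel G.Adj] {b : ℕ} {X Y₁ Y₂ : Finset V} (hX : IsIndep G X)
    (hY₁ : IsIndep G Y₁) (hY₂ : IsIndep G Y₂) (hY₁X : Disjoint Y₁ X) (hY₂X : Disjoint Y₂ X)
    (hY₁ne : Y₁.Nonempty) (hY₂ne : Y₂.Nonempty) (hb : #(univ \ X) ≤ b)
    (hboth : #{x ∈ X | (∃ y ∈ Y₁, G.Adj x y) ∧ ∃ y ∈ Y₂, G.Adj x y} ≤ #Y₁ + #Y₂) :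
    Feasible G b := by
  set X₁ := {x ∈ X | ∀ y ∈ Y₁, ¬G.Adj x y}
  set X₂ := {x ∈ X | (∃ y ∈ Y₁, G.Adj x y) ∧ ∀ y ∈ Y₂, ¬G.Adj x y}
  set X₃ := {x ∈ X | (∃ y ∈ Y₁, G.Adj x y) ∧ ∃ y ∈ Y₂, G.Adj x y}
  have hunion : X₁ ∪ X₂ ∪ X₃ = X := by
    ext x
    simp only [X₁, X₂, X₃, mem_union, mem_filter]
    constructor
    · tauto
    · intro hx
      by_cases h₁ : ∃ y ∈ Y₁, G.Adj x y <;> by_cases h₂ : ∃ y ∈ Y₂, G.Adj x y <;>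
        simp_all
  have hsub : ∀ {Y : Finset V}, Disjoint Y X → Y ⊆ univ \ (X₁ ∪ X₂ ∪ X₃) := fun h => by
    rw [hunion, ← compl_eq_univ_sdiff]
    exact subset_compl_iff_disjoint_right.mpr h
  refine ⟨X₁, X₂, X₃, Y₁, Y₂, ?_, ?_, ?_, hunion ▸ hX, hY₁ne, hY₂ne, hsub hY₁X, hsub hY₂X,
    hunion ▸ hb, ?_, ?_, hboth⟩
  · exact disjoint_filter.mpr fun _ _ h₁ ⟨⟨y, hy, hxy⟩, _⟩ => h₁ y hy hxy
  · exact disjoint_filter.mpr fun _ _ h₁ ⟨⟨y, hy, hxy⟩, _⟩ => h₁ y hy hxy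
  · exact disjoint_filter.mpr fun _ _ ⟨_, h₂⟩ ⟨_, y, hy, hxy⟩ => h₂ y hy hxy
  · exact (hX.mono_s16 (filter_subset _ _)).union hY₁ fun x hx => (mem_filter.mp hx).2
  · exact (hX.mono_s16 (filter_subset _ _)).union hY₂ fun x hx => (mem_filter.mp hx).2.2

lemma card_filter_adj_add_card_filter_adj_le_degree {V : Type*} [Fintype V] [DecidableEq V]
    {G : SimpleGraph V} [DecidableRel G.Adj] {S T : Finset V} (hST : Disjoint S T) (y : V) :
    #{x ∈ S | G.Adj y x} + #{x ∈ T | G.Adj y x} ≤ G.degree y := by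
  rw [← card_union_of_disjoint (disjoint_filter_filter hST), ← filter_union,
    ← G.card_neighborFinset_eq_degree, G.neighborFinset_eq_filter]
  exact card_le_card (filter_subset_filter _ (subset_univ _))

/-- Choose `y₀ ∈ Y` with the fewest neighbours in `X`. -/
lemma exists_forall_card_filter_adj_add_le {V : Type*} [Fintype V] [DecidableEq V]
    {G : SimpleGraph V} [DecidableRel G.Adj] {r : ℕ} (hreg : G.IsRegularOfDegree r)
    {X Y : Finset V} (hXY : Disjoint X Y) (hY : Y.Nonempty) :
    ∃ y₀ ∈ Y, ∀ y ∈ Y, #{z ∈ Y | G.Adj y z} + #{x ∈ X | G.Adj y₀ x} ≤ r := by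
  obtain ⟨y₀, hy₀, hmin⟩ := exists_min_image Y (fun y => #{x ∈ X | G.Adj y x}) hY
  refine ⟨y₀, hy₀, fun y hy => ?_⟩
  have hdeg := card_filter_adj_add_card_filter_adj_le_degree (G := G) hXY y
  rw [hreg y] at hdeg
  have := hmin y hy
  omega

/-- This is the only place where `r ≤ 5` matters: `r = 6`, `d = 4`, `k = 2` is a
counterexample. -/
lemma le_add_one_of_le_mul_sub_add_one {r d k : ℕ} (hr : r ≤ 5) (hdr : d ≤ r)
    (h : r ≤ k * (r - d + 1)) : d ≤ k + 1 := by
  by_contra! hk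
  have : r ≤ (d - 2) * (r - d + 1) := h.trans (Nat.mul_le_mul_right _ (by omega))
  interval_cases r <;> interval_cases d <;> omega

/-- Every finite nonempty `r`-regular graph with `2 ≤ r ≤ 5` is of class one. -/
theorem regular_classOne_of_deg_le_five {V : Type*} [Fintype V] [DecidableEq V] [Nonempty V]
    (G : SimpleGraph V) [DecidableRel G.Adj] (r : ℕ) (hr2 : 2 ≤ r) (hr5 : r ≤ 5)
    (hreg : G.IsRegularOfDegree r) : ClassOne G := by
  obtain ⟨X, hX⟩ := G.maximumIndepSet_exists
  set Y := univ \ X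
  obtain ⟨x, hx⟩ := hX.nonempty
  have hrY : r ≤ #Y := hreg x ▸ hX.isIndep.degree_le_card_univ_sdiff hx
  have hYne : Y.Nonempty := card_pos.mp (by omega)
  obtain ⟨y₀, hy₀, hy₀min⟩ :=
    exists_forall_card_filter_adj_add_le hreg (X := X) (Y := Y) disjoint_sdiff hYne
  set d := #{x ∈ X | G.Adj y₀ x}
  obtain ⟨I, hIY, hI, hYI⟩ := exists_isIndep_subset_card_le_mul G (r - d) Y fun y hy => by
    have := hy₀min y hy
    omega
  have hdI : d ≤ #I + 1 := le_add_one_of_le_mul_sub_add_one hr5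
    (by have := hy₀min y₀ hy₀; omega) (hrY.trans hYI)
  have hIne : I.Nonempty := card_pos.mp <| Nat.pos_of_ne_zero fun h => by
    rw [h, zero_mul] at hYI
    omega
  refine feasible_of_card_adj_both_le hX.isIndep hI (isIndep_singleton_s16 y₀)
    (disjoint_of_subset_left hIY sdiff_disjoint) (disjoint_singleton_left.mpr (mem_sdiff.mp hy₀).2)
    hIne (singleton_nonempty y₀) hX.card_univ_sdiff_le_coverNumber ?_
  calc #{x ∈ X | (∃ y ∈ I, G.Adj x y) ∧ ∃ y ∈ ({y₀} : Finset V), G.Adj x y}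
      ≤ d := card_le_card fun x hx => by
        simp only [mem_filter, mem_singleton, exists_eq_left] at hx ⊢
        exact ⟨hx.1, hx.2.2.symm⟩
    _ ≤ #I + #{y₀} := by rw [card_singleton]; exact hdI
end
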